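/- Let f : ℝ² → ℝ be smooth, let a^f(x,y,p) = f_xx(x,y) + 2f_xy(x,y)p + f_yy(x,y)p², and let I(x,y,p) = (a^f)_x(x,y,p) + p·(a^f)_y(x,y,p). If the origin (0,0,0) is a critical point of a^f (i.e. (a^f)_x(0,0,0) = (a^f)_y(0,0,0) = (a^f)_p(0,0,0) = 0), then I(0,0,0) = 0 and ∂I/∂p (0,0,0) = 0; that is, the flec-surface of a^f passes through the origin and has vertical tangent plane there. -/

import Mathlib

/-!
On each vertical line `(x, y, ·)` the function `a^f` is quadratic in `p`, so `I^{a^f}(x, y, ·)` is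
a cubic whose derivative at `p = 0` is `2 ∂ₓf_xy + ∂_y f_xx`. By symmetry of third derivatives
both terms equal `f_xxy = (a^f)_y(x, y, 0)`, so `∂I/∂p (x, y, 0) = 3 (a^f)_y(x, y, 0)`, while
`I(x, y, 0) = (a^f)_x(x, y, 0)`. At a critical point both vanish.
-/

noncomputable section

/-- Partial derivative in the first variable of a function on `ℝ × ℝ`. -/
def pdx (f : ℝ × ℝ → ℝ) (q : ℝ × ℝ) : ℝ := deriv (fun t => f (t, q.2)) q.1

/-- Partial derivative in the second variable of a function on `ℝ × ℝ`. -/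
def pdy (f : ℝ × ℝ → ℝ) (q : ℝ × ℝ) : ℝ := deriv (fun t => f (q.1, t)) q.2

/-- Partial derivative in `x` of a function on `ℝ × ℝ × ℝ` (coordinates `(x, y, p)`). -/
def pDx (F : ℝ × ℝ × ℝ → ℝ) (q : ℝ × ℝ × ℝ) : ℝ := deriv (fun t => F (t, q.2.1, q.2.2)) q.1

/-- Partial derivative in `y` of a function on `ℝ × ℝ × ℝ` (coordinates `(x, y, p)`). -/
def pDy (F : ℝ × ℝ × ℝ → ℝ) (q : ℝ × ℝ × ℝ) : ℝ := deriv (fun t => F (q.1, t, q.2.2)) q.2.1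

/-- Partial derivative in `p` of a function on `ℝ × ℝ × ℝ` (coordinates `(x, y, p)`). -/
def pDp (F : ℝ × ℝ × ℝ → ℝ) (q : ℝ × ℝ × ℝ) : ℝ := deriv (fun t => F (q.1, q.2.1, t)) q.2.2

/-- The asymptotic IDE function `a^f(x,y,p) = f_xx + 2 f_xy p + f_yy p²`. -/
def aIDE (f : ℝ × ℝ → ℝ) (q : ℝ × ℝ × ℝ) : ℝ :=
  pdx (pdx f) (q.1, q.2.1) + 2 * pdy (pdx f) (q.1, q.2.1) * q.2.2
    + pdy (pdy f) (q.1, q.2.1) * q.2.2 ^ 2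

/-- The inflection function `I^F(x,y,p) = F_x + p·F_y`; its zero set is the flec-surface. -/
def inflFun (F : ℝ × ℝ × ℝ → ℝ) (q : ℝ × ℝ × ℝ) : ℝ := pDx F q + q.2.2 * pDy F q

theorem hasDerivAt_quadratic (a b c t : ℝ) :
    HasDerivAt (fun s => a + 2 * b * s + c * s ^ 2) (2 * b + 2 * c * t) t := by
  refine ((((hasDerivAt_id t).const_mul (2 * b)).const_add a).add
    ((hasDerivAt_pow 2 t).const_mul c)).congr_deriv ?_
  simp only [mul_one, Nat.cast_ofNat]
  ring

theorem fderiv_fderiv_apply_const {E F : Type*} [NormedAddCommGroup E] [NormedSpace ℝ E]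
    [NormedAddCommGroup F] [NormedSpace ℝ F] {g : E → F} {x : E}
    (hg : DifferentiableAt ℝ (fderiv ℝ g) x) (v w : E) :
    fderiv ℝ (fun z => fderiv ℝ g z v) x w = fderiv ℝ (fderiv ℝ g) x w v := by
  rw [fderiv_clm_apply hg (differentiableAt_const v)]
  simp

section PartialDerivatives

variable {g : ℝ × ℝ → ℝ}

theorem DifferentiableAt.hasDerivAt_pdx {x y : ℝ} (hg : DifferentiableAt ℝ g (x, y)) :
    HasDerivAt (fun t => g (t, y)) (pdx g (x, y)) x :=
  (hg.comp x (differentiableAt_id.prodMk (differentiableAt_const y))).hasDerivAt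

theorem DifferentiableAt.hasDerivAt_pdy {x y : ℝ} (hg : DifferentiableAt ℝ g (x, y)) :
    HasDerivAt (fun t => g (x, t)) (pdy g (x, y)) y :=
  (hg.comp y ((differentiableAt_const x).prodMk differentiableAt_id)).hasDerivAt

theorem pdx_eq_fderiv (hg : Differentiable ℝ g) : pdx g = fun q => fderiv ℝ g q (1, 0) := by
  funext q
  have hline : HasDerivAt (fun t : ℝ => (t, q.2)) ((1 : ℝ), (0 : ℝ)) q.1 :=
    (hasDerivAt_id q.1).prodMk (hasDerivAt_const _ _)
  exact ((hg q).hasFDerivAt.comp_hasDerivAt q.1 hline).deriv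

theorem pdy_eq_fderiv (hg : Differentiable ℝ g) : pdy g = fun q => fderiv ℝ g q (0, 1) := by
  funext q
  have hline : HasDerivAt (fun t : ℝ => (q.1, t)) ((0 : ℝ), (1 : ℝ)) q.2 :=
    (hasDerivAt_const _ _).prodMk (hasDerivAt_id q.2)
  exact ((hg q).hasFDerivAt.comp_hasDerivAt q.2 hline).deriv

theorem ContDiff.pdx {m n : WithTop ℕ∞} (hg : ContDiff ℝ n g) (hmn : m + 1 ≤ n) :
    ContDiff ℝ m (pdx g) := by
  rw [pdx_eq_fderiv (hg.differentiable (zero_lt_one.trans_le (le_add_self.trans hmn)).ne')]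
  exact (hg.fderiv_right hmn).clm_apply contDiff_const

theorem ContDiff.pdy {m n : WithTop ℕ∞} (hg : ContDiff ℝ n g) (hmn : m + 1 ≤ n) :
    ContDiff ℝ m (pdy g) := by
  rw [pdy_eq_fderiv (hg.differentiable (zero_lt_one.trans_le (le_add_self.trans hmn)).ne')]
  exact (hg.fderiv_right hmn).clm_apply contDiff_const

theorem pdx_pdy_comm (hg : ContDiff ℝ 2 g) (q : ℝ × ℝ) : pdx (pdy g) q = pdy (pdx g) q := by
  have hg' : Differentiable ℝ g := hg.differentiable (by norm_num)
  have hg'' : Differentiable ℝ (fderiv ℝ g) :=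
    (hg.fderiv_right (m := 1) (by norm_num)).differentiable (by norm_num)
  rw [pdy_eq_fderiv hg', pdx_eq_fderiv hg', pdx_eq_fderiv (hg''.clm_apply (differentiable_const _)),
    pdy_eq_fderiv (hg''.clm_apply (differentiable_const _))]
  simp only [fderiv_fderiv_apply_const (hg'' q)]
  exact (hg.contDiffAt.isSymmSndFDerivAt (by simp)).eq _ _

end PartialDerivatives

section AsymptoticIDE

variable {f : ℝ × ℝ → ℝ}

theorem differentiable_aIDE_coeffs (hf : ContDiff ℝ 3 f) :
    Differentiable ℝ (pdx (pdx f)) ∧ Differentiable ℝ (pdy (pdx f)) ∧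
      Differentiable ℝ (pdy (pdy f)) := by
  have hfx : ContDiff ℝ 2 (pdx f) := hf.pdx (by norm_num)
  have hfy : ContDiff ℝ 2 (pdy f) := hf.pdy (by norm_num)
  exact ⟨(hfx.pdx (m := 1) (by norm_num)).differentiable (by norm_num),
    (hfx.pdy (m := 1) (by norm_num)).differentiable (by norm_num),
    (hfy.pdy (m := 1) (by norm_num)).differentiable (by norm_num)⟩

theorem pDx_aIDE (hf : ContDiff ℝ 3 f) (x y p : ℝ) :
    pDx (aIDE f) (x, y, p) = pdx (pdx (pdx f)) (x, y) + 2 * pdx (pdy (pdx f)) (x, y) * p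
      + pdx (pdy (pdy f)) (x, y) * p ^ 2 := by
  obtain ⟨hA, hB, hC⟩ := differentiable_aIDE_coeffs hf
  exact (((hA _).hasDerivAt_pdx.add (((hB _).hasDerivAt_pdx.const_mul 2).mul_const p)).add
    ((hC _).hasDerivAt_pdx.mul_const (p ^ 2))).deriv

theorem pDy_aIDE (hf : ContDiff ℝ 3 f) (x y p : ℝ) :
    pDy (aIDE f) (x, y, p) = pdy (pdx (pdx f)) (x, y) + 2 * pdy (pdy (pdx f)) (x, y) * p
      + pdy (pdy (pdy f)) (x, y) * p ^ 2 := by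
  obtain ⟨hA, hB, hC⟩ := differentiable_aIDE_coeffs hf
  exact (((hA _).hasDerivAt_pdy.add (((hB _).hasDerivAt_pdy.const_mul 2).mul_const p)).add
    ((hC _).hasDerivAt_pdy.mul_const (p ^ 2))).deriv

theorem inflFun_apply_zero (F : ℝ × ℝ × ℝ → ℝ) (x y : ℝ) :
    inflFun F (x, y, 0) = pDx F (x, y, 0) := by
  simp [inflFun]

theorem pDp_inflFun_aIDE_zero (hf : ContDiff ℝ 3 f) (x y : ℝ) :
    pDp (inflFun (aIDE f)) (x, y, 0) = 3 * pDy (aIDE f) (x, y, 0) := by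
  have hcubic : HasDerivAt (fun t => inflFun (aIDE f) (x, y, t))
      (2 * pdx (pdy (pdx f)) (x, y) + pdy (pdx (pdx f)) (x, y)) 0 := by
    simp only [inflFun, pDx_aIDE hf, pDy_aIDE hf]
    refine ((hasDerivAt_quadratic _ _ _ 0).add
      ((hasDerivAt_id' 0).mul (hasDerivAt_quadratic _ _ _ 0))).congr_deriv ?_
    simp
  rw [pDp, hcubic.deriv, pdx_pdy_comm (hf.pdx (by norm_num)), pDy_aIDE hf]
  ring

end AsymptoticIDE

theorem lemmaF_general (f : ℝ × ℝ → ℝ) (hf : ContDiff ℝ (⊤ : ℕ∞) f)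
    (hx : pDx (aIDE f) (0, 0, 0) = 0)
    (hy : pDy (aIDE f) (0, 0, 0) = 0) :
    inflFun (aIDE f) (0, 0, 0) = 0 ∧ pDp (inflFun (aIDE f)) (0, 0, 0) = 0 := by
  have hf3 : ContDiff ℝ 3 f := hf.of_le (WithTop.coe_le_coe.mpr le_top)
  exact ⟨by rw [inflFun_apply_zero, hx], by rw [pDp_inflFun_aIDE_zero hf3, hy, mul_zero]⟩

/-- Lemma F: if the origin is a critical point of `a^f`, then the
flec-surface of `a^f` passes through the origin and has vertical tangent plane there. -/
theorem lemmaF (f : ℝ × ℝ → ℝ) (hf : ContDiff ℝ (⊤ : ℕ∞) f)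
    (hx : pDx (aIDE f) (0, 0, 0) = 0)
    (hy : pDy (aIDE f) (0, 0, 0) = 0)
    (hp : pDp (aIDE f) (0, 0, 0) = 0) :
    inflFun (aIDE f) (0, 0, 0) = 0 ∧ pDp (inflFun (aIDE f)) (0, 0, 0) = 0 :=
  lemmaF_general f hf hx hy
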